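/- arXiv:2507.07449 — 4 statements merged into one kernel-verified Lean document; each statement's English description precedes it below -/
import Mathlib

section
/- For a compact metric space X and positive reals s, t, d_GH(tX, sX) = (1/2)|t − s|·diam(X). -/
/-!
The distortion of the identity map `tX → sX` is `|t - s| · diam X`, which bounds
`d_GH(tX, sX)` by half of it. Conversely, two spaces at Gromov–Hausdorff distance `d` embed
isometrically into a common space with Hausdorff distance `d`, and moving both endpoints of a
pair by at most `d` changes its distance by at most `2d`, so diameters differ by at most `2d`;
here they are `t · diam X` and `s · diam X`.
-/

open Metric GromovHausdorff Set

theorem Metric.diam_le_diam_add_two_mul_hausdorffDist {α : Type*} [PseudoMetricSpace α]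
    {A B : Set α} (hA : Bornology.IsBounded A) (hB : Bornology.IsBounded B) (hBne : B.Nonempty) :
    diam A ≤ diam B + 2 * hausdorffDist A B := by
  refine diam_le_of_forall_dist_le
    (add_nonneg diam_nonneg (mul_nonneg zero_le_two hausdorffDist_nonneg)) fun x hx y hy => ?_
  have hfin : hausdorffEDist A B ≠ ⊤ :=
    hausdorffEDist_ne_top_of_nonempty_of_bounded ⟨x, hx⟩ hBne hA hB
  have hxB := infDist_le_hausdorffDist_of_mem hx hfin
  have hyB := infDist_le_hausdorffDist_of_mem hy hfin
  suffices dist x y - infDist x B - diam B ≤ infDist y B by linarith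
  refine (le_infDist hBne).2 fun y' hy' => ?_
  have := dist_le_infDist_add_diam (x := x) hB hy'
  linarith [dist_triangle_right x y y']

theorem GromovHausdorff.abs_diam_sub_diam_le_two_mul_ghDist (X Y : Type*)
    [MetricSpace X] [CompactSpace X] [Nonempty X] [MetricSpace Y] [CompactSpace Y] [Nonempty Y] :
    |diam (univ : Set X) - diam (univ : Set Y)| ≤ 2 * ghDist X Y := by
  have hl := isometry_optimalGHInjl X Y
  have hr := isometry_optimalGHInjr X Y
  have bl := (isCompact_range hl.continuous).isBounded
  have br := (isCompact_range hr.continuous).isBounded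
  have hlr := diam_le_diam_add_two_mul_hausdorffDist bl br (range_nonempty _)
  have hrl := diam_le_diam_add_two_mul_hausdorffDist br bl (range_nonempty _)
  rw [hausdorffDist_comm] at hrl
  rw [← hausdorffDist_optimal, ← hl.diam_range, ← hr.diam_range, abs_sub_le_iff]
  constructor <;> linarith

theorem GromovHausdorff.ghDist_le_of_equiv {X Y : Type*}
    [MetricSpace X] [CompactSpace X] [Nonempty X] [MetricSpace Y] [CompactSpace Y] [Nonempty Y]
    (e : X ≃ Y) {ε : ℝ} (he : ∀ a b : X, |dist a b - dist (e a) (e b)| ≤ ε) :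
    ghDist X Y ≤ ε / 2 := by
  have := ghDist_le_of_approx_subsets (s := univ) (fun x => e x.1) (ε₁ := 0) (ε₃ := 0)
    (fun x => ⟨x, mem_univ x, by simp⟩) (fun y => ⟨⟨e.symm y, mem_univ _⟩, by simp⟩)
    (fun a b => he a b)
  linarith

theorem Metric.diam_univ_eq_mul_of_dist_eq {X Y : Type*} [PseudoMetricSpace X] [BoundedSpace X]
    [PseudoMetricSpace Y] [BoundedSpace Y] {t : ℝ} (ht : 0 < t) (e : X ≃ Y)
    (he : ∀ a b : X, dist (e a) (e b) = t * dist a b) :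
    diam (univ : Set Y) = t * diam (univ : Set X) := by
  refine le_antisymm ?_ ?_
  · refine diam_le_of_forall_dist_le (mul_nonneg ht.le diam_nonneg) fun y _ y' _ => ?_
    rw [← e.apply_symm_apply y, ← e.apply_symm_apply y', he]
    exact mul_le_mul_of_nonneg_left (dist_le_diam_of_mem (.all _) trivial trivial) ht.le
  · rw [← le_div_iff₀' ht]
    refine diam_le_of_forall_dist_le (div_nonneg diam_nonneg ht.le) fun a _ b _ => ?_
    rw [le_div_iff₀' ht, ← he]
    exact dist_le_diam_of_mem (.all _) trivial trivial

theorem ghDist_scale_self_general (s t : ℝ) (hs : 0 < s) (ht : 0 < t)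
    (X Xt Xs : Type*) [MetricSpace X] [CompactSpace X]
    [MetricSpace Xt] [CompactSpace Xt] [Nonempty Xt]
    [MetricSpace Xs] [CompactSpace Xs] [Nonempty Xs]
    (et : X ≃ Xt) (es : X ≃ Xs)
    (het : ∀ a b : X, dist (et a) (et b) = t * dist a b)
    (hes : ∀ a b : X, dist (es a) (es b) = s * dist a b) :
    GromovHausdorff.ghDist Xt Xs = (1 / 2) * |t - s| * Metric.diam (Set.univ : Set X) := by
  have hdiam := abs_diam_sub_diam_le_two_mul_ghDist Xt Xs
  rw [diam_univ_eq_mul_of_dist_eq ht et het, diam_univ_eq_mul_of_dist_eq hs es hes, ← sub_mul,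
    abs_mul, abs_of_nonneg diam_nonneg] at hdiam
  have hdist : ∀ a b : Xt, |dist a b - dist (es (et.symm a)) (es (et.symm b))|
      ≤ |t - s| * diam (univ : Set X) := by
    refine et.surjective.forall₂.2 fun a b => ?_
    rw [et.symm_apply_apply, et.symm_apply_apply, het, hes, ← sub_mul, abs_mul, abs_dist]
    exact mul_le_mul_of_nonneg_left (dist_le_diam_of_mem (.all _) trivial trivial)
      (abs_nonneg _)
  have := ghDist_le_of_equiv (et.symm.trans es) hdist
  linarith

/-- For a compact metric space `X` and positive reals `s, t`,
`d_GH(tX, sX) = (1/2)|t − s|·diam(X)`, where `tX` denotes `X` with its metric scaled by `t`,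
given as a space `Xt` together with a bijection from `X` multiplying all distances by `t`. -/
theorem ghDist_scale_self (s t : ℝ) (hs : 0 < s) (ht : 0 < t)
    (X Xt Xs : Type*) [MetricSpace X] [CompactSpace X] [Nonempty X]
    [MetricSpace Xt] [CompactSpace Xt] [Nonempty Xt]
    [MetricSpace Xs] [CompactSpace Xs] [Nonempty Xs]
    (et : X ≃ Xt) (es : X ≃ Xs)
    (het : ∀ a b : X, dist (et a) (et b) = t * dist a b)
    (hes : ∀ a b : X, dist (es a) (es b) = s * dist a b) :
    GromovHausdorff.ghDist Xt Xs = (1 / 2) * |t - s| * Metric.diam (Set.univ : Set X) :=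
  ghDist_scale_self_general s t hs ht X Xt Xs et es het hes
end

section
/- Let c = Σ_{n≥1} r_n be a convergent series with r_n > 0, set r'_n = r_n + r_{n+1} for n ≥ 1, r'_0 = 2c, r'_ω = 8c. For a sequence X = (X_n)_{n≥1} of compact metric spaces with diam(X_n) ≤ r_n, let 𝔖_r(X) be the disjoint union of one-point spaces X_0, X_ω, X_{ω+1} and the X_n (indexed by ordinals 0 ≤ λ ≤ ω+1), with metric extending each d_{X_λ} and with d(x_α, x_β) = 3·Σ_{α ≤ λ < β} r'_λ for x_α ∈ X_α, x_β ∈ X_β, α < β. Then this d is a well-defined metric on 𝔖_r(X), the space 𝔖_r(X) is compact, and diam(𝔖_r(X)) = 36c − 3r_1. -/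
open scoped ENNReal

/-- Index set for the block construction: `some (some n) = n`, `some none = ω`, `none = ω+1`. -/
abbrev OrdIdx : Type := WithTop (WithTop ℕ)

/-- The blocks: `X_0`, `X_ω`, `X_{ω+1}` are one-point spaces, and block `n+1` is `X (n+1)`. -/
def block (X : ℕ → Type) : OrdIdx → Type
  | some (some 0) => PUnit
  | some (some (n + 1)) => X (n + 1)
  | some none => PUnit
  | none => PUnit

instance blockMetric' (X : ℕ → Type) [∀ n, MetricSpace (X n)] :
    ∀ l : OrdIdx, MetricSpace (block X l)
  | some (some 0) => inferInstanceAs (MetricSpace PUnit)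
  | some (some (n + 1)) => inferInstanceAs (MetricSpace (X (n + 1)))
  | some none => inferInstanceAs (MetricSpace PUnit)
  | none => inferInstanceAs (MetricSpace PUnit)

/-- `c = Σ_{n ≥ 1} r_n`. -/
noncomputable def cSum (r : ℕ → ℝ) : ℝ := ∑' n, r (n + 1)

/-- `r'_0 = 2c`, `r'_{n+1} = r_{n+1} + r_{n+2}`, `r'_ω = 8c` (value at `ω+1` unused). -/
noncomputable def rp (r : ℕ → ℝ) : OrdIdx → ℝ
  | some (some 0) => 2 * cSum r
  | some (some (n + 1)) => r (n + 1) + r (n + 2)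
  | some none => 8 * cSum r
  | none => 0

/-- `Σ_{α ≤ λ < β} r'_λ`, as the supremum of finite subsums (a `tsum` of nonnegative terms). -/
noncomputable def gapSum (r : ℕ → ℝ) (α β : OrdIdx) : ℝ :=
  ∑' l : {l : OrdIdx // α ≤ l ∧ l < β}, rp r l.val

/-- The distance on the disjoint union `𝔖_r(X) = Σ_λ block X λ`: block distances inside a
block, and `3·Σ_{α ≤ λ < β} r'_λ` between blocks `α < β`. -/
noncomputable def blockDist (r : ℕ → ℝ) (X : ℕ → Type) [∀ n, MetricSpace (X n)]
    (p q : Sigma (block X)) : ℝ :=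
  if h : p.1 = q.1 then dist p.2 (cast (congrArg (block X) h.symm) q.2)
  else 3 * gapSum r (min p.1 q.1) (max p.1 q.1)

/-!
Put `F λ = Σ_{μ < λ} r'_μ` (`blockPos`). Additivity of the sums gives
`Σ_{α ≤ λ < β} r'_λ = F β - F α`, so points of distinct blocks `α`, `β` are at distance
`3 |F α - F β|`: the blocks sit at the points `3 F λ` of a line, in increasing order. The gaps on
either side of `X_n` are `r'_{n-1}` and `r'_n`, both at least `r_n ≥ diam X_n`, so a block is
no wider than its distance to any other block, which is all the triangle inequality needs.
The blocks are compact and `F n → F ω`, so every ball around the point `X_ω` contains all but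
finitely many blocks, and the space is compact. Its diameter is the distance from `X_0` to
`X_{ω+1}`, that is `3 F (ω+1) = 3 ((4c - r_1) + 8c)`.
-/
open Filter Topology

theorem compactSpace_of_cocompact_le_nhds {Y : Type*} [TopologicalSpace Y] {a : Y}
    (h : cocompact Y ≤ 𝓝 a) : CompactSpace Y :=
  ⟨by simpa using (tendsto_id'.2 h).isCompact_insert_range_of_cocompact continuous_id⟩

namespace OrdIdx

def nat (n : ℕ) : OrdIdx := ((n : WithTop ℕ) : OrdIdx)

def ω : OrdIdx := ((⊤ : WithTop ℕ) : OrdIdx)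

theorem nat_injective : Function.Injective nat := fun _ _ h => by simpa [nat] using h

@[simp] theorem nat_le_nat {m n : ℕ} : nat m ≤ nat n ↔ m ≤ n := by simp [nat]

@[simp] theorem nat_lt_nat {m n : ℕ} : nat m < nat n ↔ m < n := by simp [nat]

@[simp] theorem nat_lt_ω (n : ℕ) : nat n < ω := WithTop.coe_lt_coe.2 (WithTop.coe_lt_top n)

@[simp] theorem ω_lt_top : ω < ⊤ := by simp [ω]

@[simp] theorem nat_ne_ω (n : ℕ) : nat n ≠ ω := (nat_lt_ω n).ne

@[simp] theorem nat_ne_top (n : ℕ) : nat n ≠ ⊤ := ((nat_lt_ω n).trans ω_lt_top).ne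

@[simp] theorem ω_ne_top : ω ≠ ⊤ := ω_lt_top.ne

theorem eq_nat_or_eq_ω_or_eq_top (l : OrdIdx) : (∃ n, l = nat n) ∨ l = ω ∨ l = ⊤ := by
  induction l using WithTop.recTopCoe with
  | top => simp
  | coe l => induction l using WithTop.recTopCoe with
    | top => exact .inr (.inl rfl)
    | coe n => exact .inl ⟨n, rfl⟩

theorem lt_nat_succ_iff {l : OrdIdx} {n : ℕ} : l < nat (n + 1) ↔ l ≤ nat n := by
  rcases eq_nat_or_eq_ω_or_eq_top l with ⟨m, rfl⟩ | rfl | rfl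
  · simp only [nat_lt_nat, nat_le_nat]; omega
  · simp [(nat_lt_ω _).not_gt]
  · simp [nat]

theorem nat_lt_iff {l : OrdIdx} {n : ℕ} : nat n < l ↔ nat (n + 1) ≤ l := by
  rw [← not_le, ← lt_nat_succ_iff, not_lt]

theorem Ico_nat_succ (n : ℕ) : Set.Ico (nat n) (nat (n + 1)) = {nat n} := by
  ext l
  simp only [Set.mem_Ico, lt_nat_succ_iff, Set.mem_singleton_iff, le_antisymm_iff, and_comm]

theorem Ici_ω : Set.Ici ω = {ω, ⊤} := by
  ext l
  rcases eq_nat_or_eq_ω_or_eq_top l with ⟨m, rfl⟩ | rfl | rfl <;>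
    simp [(nat_lt_ω _).not_ge, ω_ne_top.symm]

theorem Ico_ω_top : Set.Ico ω ⊤ = {ω} := by
  ext l
  rcases eq_nat_or_eq_ω_or_eq_top l with ⟨m, rfl⟩ | rfl | rfl <;>
    simp [(nat_lt_ω _).not_ge, ω_ne_top.symm]

theorem Iio_ω : Set.Iio ω = Set.range nat := by
  ext l
  refine ⟨fun hl => ?_, by rintro ⟨n, rfl⟩; exact nat_lt_ω n⟩
  rcases eq_nat_or_eq_ω_or_eq_top l with ⟨n, rfl⟩ | rfl | rfl
  · exact ⟨n, rfl⟩
  · exact absurd (Set.mem_Iio.1 hl) (lt_irrefl ω)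
  · exact absurd hl ω_lt_top.not_gt

end OrdIdx

open OrdIdx

section Series

variable {r : ℕ → ℝ}

theorem r_succ_le_cSum (hr : ∀ n, 1 ≤ n → 0 < r n) (hsum : Summable fun n => r (n + 1))
    (n : ℕ) : r (n + 1) ≤ cSum r :=
  hsum.le_tsum n fun m _ => (hr (m + 1) (Nat.le_add_left 1 m)).le

theorem cSum_pos (hr : ∀ n, 1 ≤ n → 0 < r n) (hsum : Summable fun n => r (n + 1)) :
    0 < cSum r :=
  (hr 1 le_rfl).trans_le (r_succ_le_cSum hr hsum 0)

theorem rp_pos (hr : ∀ n, 1 ≤ n → 0 < r n) (hsum : Summable fun n => r (n + 1))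
    {l : OrdIdx} (hl : l ≠ ⊤) : 0 < rp r l := by
  have hc := cSum_pos hr hsum
  rcases eq_nat_or_eq_ω_or_eq_top l with ⟨_ | n, rfl⟩ | rfl | rfl
  · exact mul_pos two_pos hc
  · exact add_pos (hr (n + 1) (Nat.le_add_left 1 n)) (hr (n + 2) (Nat.le_add_left 1 (n + 1)))
  · exact mul_pos (by norm_num) hc
  · exact absurd rfl hl

theorem rp_nonneg (hr : ∀ n, 1 ≤ n → 0 < r n) (hsum : Summable fun n => r (n + 1))
    (l : OrdIdx) : 0 ≤ rp r l := by
  rcases eq_or_ne l ⊤ with rfl | hl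
  · exact le_rfl
  · exact (rp_pos hr hsum hl).le

theorem r_succ_le_rp_nat (hr : ∀ n, 1 ≤ n → 0 < r n) (hsum : Summable fun n => r (n + 1))
    (n : ℕ) : r (n + 1) ≤ rp r (nat n) := by
  cases n with
  | zero =>
    show r 1 ≤ 2 * cSum r
    linarith [r_succ_le_cSum hr hsum 0, cSum_pos hr hsum]
  | succ n => exact le_add_of_nonneg_left (hr (n + 1) (Nat.le_add_left 1 n)).le

theorem r_succ_le_rp_nat_succ (hr : ∀ n, 1 ≤ n → 0 < r n) (n : ℕ) :
    r (n + 1) ≤ rp r (nat (n + 1)) :=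
  le_add_of_nonneg_right (hr (n + 2) (Nat.le_add_left 1 (n + 1))).le

theorem hasSum_rp_nat (hsum : Summable fun n => r (n + 1)) :
    HasSum (fun n => rp r (nat n)) (4 * cSum r - r 1) := by
  have htail : HasSum (fun n => r (n + 1 + 1)) (cSum r - r 1) := by
    have h := (hasSum_nat_add_iff' 1).2 hsum.hasSum
    rwa [Finset.sum_range_one] at h
  have hval : 4 * cSum r - r 1 - rp r (nat 0) = cSum r + (cSum r - r 1) := by
    show _ - 2 * cSum r = _
    ring
  refine (hasSum_nat_add_iff' 1).1 ?_
  rw [Finset.sum_range_one, hval]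
  exact hsum.hasSum.add htail

theorem summable_rp (hsum : Summable fun n => r (n + 1)) : Summable (rp r) := by
  refine (summable_subtype_and_compl (s := Set.Iio ω)).1 ⟨?_, ?_⟩
  · rw [Iio_ω]
    exact (nat_injective.hasSum_range_iff (f := rp r) |>.2 (hasSum_rp_nat hsum)).summable
  · rw [Set.compl_Iio, Ici_ω]
    exact ((Set.finite_singleton ⊤).insert ω).summable (rp r)

theorem gapSum_eq_tsum_Ico (α β : OrdIdx) : gapSum r α β = ∑' l : Set.Ico α β, rp r l := rfl

theorem gapSum_add (hsum : Summable fun n => r (n + 1)) {α β γ : OrdIdx} (hαβ : α ≤ β)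
    (hβγ : β ≤ γ) : gapSum r α β + gapSum r β γ = gapSum r α γ := by
  rw [gapSum_eq_tsum_Ico, gapSum_eq_tsum_Ico, gapSum_eq_tsum_Ico,
    ← Set.Ico_union_Ico_eq_Ico hαβ hβγ]
  exact ((summable_rp hsum).subtype _).tsum_union_disjoint Set.Ico_disjoint_Ico_same
    ((summable_rp hsum).subtype _) |>.symm

noncomputable def blockPos (r : ℕ → ℝ) (l : OrdIdx) : ℝ := gapSum r ⊥ l

theorem gapSum_eq_sub (hsum : Summable fun n => r (n + 1)) {α β : OrdIdx} (h : α ≤ β) :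
    gapSum r α β = blockPos r β - blockPos r α := by
  rw [blockPos, blockPos, ← gapSum_add hsum bot_le h]
  ring

theorem blockPos_strictMono (hr : ∀ n, 1 ≤ n → 0 < r n) (hsum : Summable fun n => r (n + 1)) :
    StrictMono (blockPos r) := fun a b hab => by
  have hle : rp r a ≤ gapSum r a b :=
    ((summable_rp hsum).subtype _).le_tsum ⟨a, le_rfl, hab⟩ fun l _ => rp_nonneg hr hsum l
  rw [gapSum_eq_sub hsum hab.le] at hle
  linarith [rp_pos hr hsum hab.ne_top]

theorem gapSum_min_max (hr : ∀ n, 1 ≤ n → 0 < r n) (hsum : Summable fun n => r (n + 1))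
    (a b : OrdIdx) : gapSum r (min a b) (max a b) = |blockPos r a - blockPos r b| := by
  have hmono := (blockPos_strictMono hr hsum).monotone
  rcases le_total a b with h | h
  · rw [min_eq_left h, max_eq_right h, gapSum_eq_sub hsum h, abs_sub_comm,
      abs_of_nonneg (sub_nonneg.2 (hmono h))]
  · rw [min_eq_right h, max_eq_left h, gapSum_eq_sub hsum h,
      abs_of_nonneg (sub_nonneg.2 (hmono h))]

@[simp] theorem blockPos_bot : blockPos r ⊥ = 0 := by
  simp [blockPos, gapSum_eq_tsum_Ico]

theorem blockPos_nonneg (hr : ∀ n, 1 ≤ n → 0 < r n) (hsum : Summable fun n => r (n + 1))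
    (l : OrdIdx) : 0 ≤ blockPos r l :=
  blockPos_bot (r := r) ▸ (blockPos_strictMono hr hsum).monotone bot_le

theorem abs_blockPos_sub_le_blockPos_top (hr : ∀ n, 1 ≤ n → 0 < r n)
    (hsum : Summable fun n => r (n + 1)) (a b : OrdIdx) :
    |blockPos r a - blockPos r b| ≤ blockPos r ⊤ :=
  have hmono := (blockPos_strictMono hr hsum).monotone
  abs_sub_le_of_nonneg_of_le (blockPos_nonneg hr hsum a) (hmono le_top)
    (blockPos_nonneg hr hsum b) (hmono le_top)

theorem blockPos_nat_succ (hsum : Summable fun n => r (n + 1)) (n : ℕ) :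
    blockPos r (nat (n + 1)) = blockPos r (nat n) + rp r (nat n) := by
  rw [blockPos, ← gapSum_add hsum bot_le (nat_le_nat.2 n.le_succ), gapSum_eq_tsum_Ico (nat n),
    Ico_nat_succ, tsum_singleton, blockPos]

theorem blockPos_nat (hsum : Summable fun n => r (n + 1)) (n : ℕ) :
    blockPos r (nat n) = ∑ m ∈ Finset.range n, rp r (nat m) := by
  induction n with
  | zero => exact blockPos_bot
  | succ n ih => rw [blockPos_nat_succ hsum, ih, Finset.sum_range_succ]

theorem blockPos_ω (hsum : Summable fun n => r (n + 1)) : blockPos r ω = 4 * cSum r - r 1 := by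
  rw [blockPos, gapSum_eq_tsum_Ico, Set.Ico_bot, Iio_ω, tsum_range (rp r) nat_injective,
    (hasSum_rp_nat hsum).tsum_eq]

theorem blockPos_top (hsum : Summable fun n => r (n + 1)) :
    blockPos r ⊤ = 12 * cSum r - r 1 := by
  rw [blockPos, ← gapSum_add hsum bot_le le_top (β := ω), ← blockPos, blockPos_ω hsum,
    gapSum_eq_tsum_Ico, Ico_ω_top, tsum_singleton]
  show _ + 8 * cSum r = _
  ring

theorem tendsto_blockPos_nat (hsum : Summable fun n => r (n + 1)) :
    Tendsto (fun n => blockPos r (nat n)) atTop (𝓝 (blockPos r ω)) := by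
  simpa only [blockPos_nat hsum, blockPos_ω hsum] using (hasSum_rp_nat hsum).tendsto_sum_nat

theorem r_succ_le_abs_blockPos_sub (hr : ∀ n, 1 ≤ n → 0 < r n)
    (hsum : Summable fun n => r (n + 1)) {n : ℕ} {c : OrdIdx} (hc : c ≠ nat (n + 1)) :
    r (n + 1) ≤ |blockPos r (nat (n + 1)) - blockPos r c| := by
  have hmono := (blockPos_strictMono hr hsum).monotone
  rcases hc.lt_or_gt with hlt | hlt
  · have hpos := hmono (lt_nat_succ_iff.1 hlt)
    have hstep := r_succ_le_rp_nat hr hsum n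
    rw [blockPos_nat_succ hsum, abs_of_nonneg (by linarith [rp_nonneg hr hsum (nat n)])]
    linarith
  · have hpos := hmono (nat_lt_iff.1 hlt)
    rw [blockPos_nat_succ hsum (n + 1)] at hpos
    rw [abs_sub_comm, abs_of_nonneg (by linarith [rp_nonneg hr hsum (nat (n + 1))])]
    linarith [r_succ_le_rp_nat_succ hr n]

end Series

instance block.compactSpace (X : ℕ → Type) [∀ n, MetricSpace (X n)] [∀ n, CompactSpace (X n)] :
    ∀ l, CompactSpace (block X l)
  | some (some 0) => inferInstanceAs (CompactSpace PUnit)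
  | some (some (n + 1)) => inferInstanceAs (CompactSpace (X (n + 1)))
  | some none => inferInstanceAs (CompactSpace PUnit)
  | none => inferInstanceAs (CompactSpace PUnit)

section BlockDist

variable {r : ℕ → ℝ} {X : ℕ → Type} [∀ n, MetricSpace (X n)]

theorem blockDist_mk_same (a : OrdIdx) (x y : block X a) :
    blockDist r X ⟨a, x⟩ ⟨a, y⟩ = dist x y := by
  simp [blockDist]

theorem blockDist_mk_of_ne (hr : ∀ n, 1 ≤ n → 0 < r n) (hsum : Summable fun n => r (n + 1))
    {a b : OrdIdx} (hab : a ≠ b) (x : block X a) (y : block X b) :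
    blockDist r X ⟨a, x⟩ ⟨b, y⟩ = 3 * |blockPos r a - blockPos r b| := by
  rw [blockDist, dif_neg hab, gapSum_min_max hr hsum]

theorem abs_blockPos_sub_le_blockDist (hr : ∀ n, 1 ≤ n → 0 < r n)
    (hsum : Summable fun n => r (n + 1)) {a b : OrdIdx} (x : block X a) (y : block X b) :
    3 * |blockPos r a - blockPos r b| ≤ blockDist r X ⟨a, x⟩ ⟨b, y⟩ := by
  rcases eq_or_ne a b with rfl | hab
  · rw [sub_self, abs_zero, mul_zero, blockDist_mk_same]
    exact dist_nonneg
  · rw [blockDist_mk_of_ne hr hsum hab]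

theorem dist_le_abs_blockPos_sub [∀ n, CompactSpace (X n)] (hr : ∀ n, 1 ≤ n → 0 < r n)
    (hsum : Summable fun n => r (n + 1))
    (hdiam : ∀ n, 1 ≤ n → Metric.diam (Set.univ : Set (X n)) ≤ r n)
    {a c : OrdIdx} (hac : a ≠ c) (x y : block X a) :
    dist x y ≤ |blockPos r a - blockPos r c| := by
  rcases eq_nat_or_eq_ω_or_eq_top a with ⟨_ | n, rfl⟩ | rfl | rfl
  · exact (show dist x y = 0 from rfl).trans_le (abs_nonneg _)
  · calc dist x y ≤ Metric.diam (Set.univ : Set (X (n + 1))) :=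
          Metric.dist_le_diam_of_mem isCompact_univ.isBounded trivial trivial
      _ ≤ r (n + 1) := hdiam (n + 1) (Nat.le_add_left 1 n)
      _ ≤ _ := r_succ_le_abs_blockPos_sub hr hsum hac.symm
  · exact (show dist x y = 0 from rfl).trans_le (abs_nonneg _)
  · exact (show dist x y = 0 from rfl).trans_le (abs_nonneg _)

theorem blockDist_self (p : Sigma (block X)) : blockDist r X p p = 0 := by
  obtain ⟨a, x⟩ := p
  rw [blockDist_mk_same, dist_self]

theorem blockDist_comm (p q : Sigma (block X)) : blockDist r X p q = blockDist r X q p := by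
  obtain ⟨a, x⟩ := p
  obtain ⟨b, y⟩ := q
  rcases eq_or_ne a b with rfl | hab
  · rw [blockDist_mk_same, blockDist_mk_same, dist_comm]
  · rw [blockDist, blockDist, dif_neg hab, dif_neg hab.symm, min_comm, max_comm]

theorem blockDist_triangle [∀ n, CompactSpace (X n)] (hr : ∀ n, 1 ≤ n → 0 < r n)
    (hsum : Summable fun n => r (n + 1))
    (hdiam : ∀ n, 1 ≤ n → Metric.diam (Set.univ : Set (X n)) ≤ r n)
    (p q s : Sigma (block X)) :
    blockDist r X p q ≤ blockDist r X p s + blockDist r X s q := by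
  obtain ⟨a, x⟩ := p
  obtain ⟨b, y⟩ := q
  obtain ⟨c, z⟩ := s
  have hac := abs_blockPos_sub_le_blockDist hr hsum x z
  have hcb := abs_blockPos_sub_le_blockDist hr hsum z y
  rcases eq_or_ne a b with rfl | hab
  · rw [blockDist_mk_same]
    rcases eq_or_ne a c with rfl | hac'
    · rw [blockDist_mk_same, blockDist_mk_same]
      exact dist_triangle x z y
    · have hxy := dist_le_abs_blockPos_sub hr hsum hdiam hac' x y
      linarith [abs_nonneg (blockPos r a - blockPos r c), abs_nonneg (blockPos r c - blockPos r a)]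
  · rw [blockDist_mk_of_ne hr hsum hab]
    linarith [abs_sub_le (blockPos r a) (blockPos r c) (blockPos r b)]

theorem eq_of_blockDist_eq_zero (hr : ∀ n, 1 ≤ n → 0 < r n)
    (hsum : Summable fun n => r (n + 1)) {p q : Sigma (block X)} (h : blockDist r X p q = 0) :
    p = q := by
  obtain ⟨a, x⟩ := p
  obtain ⟨b, y⟩ := q
  rcases eq_or_ne a b with rfl | hab
  · rw [blockDist_mk_same] at h
    rw [dist_eq_zero.1 h]
  · rw [blockDist_mk_of_ne hr hsum hab, mul_eq_zero, abs_eq_zero, sub_eq_zero] at h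
    exact absurd ((blockPos_strictMono hr hsum).injective (h.resolve_left three_ne_zero)) hab

theorem blockDist_le_three_mul_blockPos_top [∀ n, CompactSpace (X n)]
    (hr : ∀ n, 1 ≤ n → 0 < r n) (hsum : Summable fun n => r (n + 1))
    (hdiam : ∀ n, 1 ≤ n → Metric.diam (Set.univ : Set (X n)) ≤ r n) (p q : Sigma (block X)) :
    blockDist r X p q ≤ 3 * blockPos r ⊤ := by
  have hspan := abs_blockPos_sub_le_blockPos_top hr hsum
  obtain ⟨a, x⟩ := p
  obtain ⟨b, y⟩ := q
  rcases eq_or_ne a b with rfl | hab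
  · obtain ⟨c, hc⟩ := exists_ne a
    rw [blockDist_mk_same]
    linarith [dist_le_abs_blockPos_sub hr hsum hdiam hc.symm x y, hspan a c, blockPos_nonneg hr hsum ⊤]
  · rw [blockDist_mk_of_ne hr hsum hab]
    linarith [hspan a b]

end BlockDist

section SigmaMetric

-- `Sigma` carries the disjoint-union topology as a global instance; here the topology on
-- `Sigma (block X)` is always the one of the metric.
attribute [-instance] instTopologicalSpaceSigma

variable {r : ℕ → ℝ} {X : ℕ → Type} [∀ n, MetricSpace (X n)]

@[reducible] noncomputable def blockMetricSpace [∀ n, CompactSpace (X n)]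
    (hr : ∀ n, 1 ≤ n → 0 < r n) (hsum : Summable fun n => r (n + 1))
    (hdiam : ∀ n, 1 ≤ n → Metric.diam (Set.univ : Set (X n)) ≤ r n) :
    MetricSpace (Sigma (block X)) where
  dist := blockDist r X
  dist_self := blockDist_self
  dist_comm := blockDist_comm
  dist_triangle p q s := blockDist_triangle hr hsum hdiam p s q
  eq_of_dist_eq_zero := eq_of_blockDist_eq_zero hr hsum

variable [MetricSpace (Sigma (block X))]

theorem isometry_sigmaMk (hd : ∀ p q : Sigma (block X), dist p q = blockDist r X p q)
    (a : OrdIdx) : Isometry (Sigma.mk a : block X a → Sigma (block X)) :=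
  Isometry.of_dist_eq fun x y => by rw [hd, blockDist_mk_same]

theorem isCompact_setOf_fst_mem [∀ n, CompactSpace (X n)]
    (hd : ∀ p q : Sigma (block X), dist p q = blockDist r X p q) {S : Set OrdIdx}
    (hS : S.Finite) : IsCompact {p : Sigma (block X) | p.1 ∈ S} := by
  have hcover : {p : Sigma (block X) | p.1 ∈ S} = ⋃ a ∈ S, Set.range (Sigma.mk a) := by
    ext ⟨a, x⟩
    simp
  rw [hcover]
  exact hS.isCompact_biUnion fun a _ => isCompact_range (isometry_sigmaMk hd a).continuous

theorem cocompact_le_nhds_ω [∀ n, CompactSpace (X n)] (hr : ∀ n, 1 ≤ n → 0 < r n)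
    (hsum : Summable fun n => r (n + 1))
    (hd : ∀ p q : Sigma (block X), dist p q = blockDist r X p q) (z : block X ω) :
    cocompact (Sigma (block X)) ≤ 𝓝 ⟨ω, z⟩ := by
  refine Metric.nhds_basis_ball.ge_iff.2 fun ε hε => mem_cocompact.2 ?_
  obtain ⟨n₀, hn₀⟩ := ((tendsto_blockPos_nat hsum).eventually_const_lt
    (sub_lt_self (blockPos r ω) (div_pos hε three_pos))).exists
  refine ⟨{p | p.1 ∈ insert ⊤ (nat '' Set.Iio n₀)},
    isCompact_setOf_fst_mem hd (((Set.finite_Iio n₀).image nat).insert ⊤), fun p hp => ?_⟩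
  obtain ⟨a, x⟩ := p
  rw [Metric.mem_ball, hd]
  rcases eq_nat_or_eq_ω_or_eq_top a with ⟨n, rfl⟩ | rfl | rfl
  · have hn : n₀ ≤ n := not_lt.1 fun h => hp (Or.inr ⟨n, h, rfl⟩)
    have hmono := (blockPos_strictMono hr hsum).monotone
    have hn₀n := hmono (nat_le_nat.2 hn)
    have hnω := hmono (nat_lt_ω n).le
    rw [blockDist_mk_of_ne hr hsum (nat_ne_ω n), abs_sub_comm, abs_of_nonneg (by linarith)]
    linarith
  · rw [blockDist_mk_same, show dist x z = 0 from rfl]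
    exact hε
  · exact absurd (Or.inl rfl) hp

theorem compactSpace_of_dist_eq_blockDist [∀ n, CompactSpace (X n)]
    (hr : ∀ n, 1 ≤ n → 0 < r n) (hsum : Summable fun n => r (n + 1))
    (hd : ∀ p q : Sigma (block X), dist p q = blockDist r X p q) :
    CompactSpace (Sigma (block X)) :=
  compactSpace_of_cocompact_le_nhds (cocompact_le_nhds_ω hr hsum hd PUnit.unit)

theorem diam_univ_of_dist_eq_blockDist [∀ n, CompactSpace (X n)] (hr : ∀ n, 1 ≤ n → 0 < r n)
    (hsum : Summable fun n => r (n + 1))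
    (hdiam : ∀ n, 1 ≤ n → Metric.diam (Set.univ : Set (X n)) ≤ r n)
    (hd : ∀ p q : Sigma (block X), dist p q = blockDist r X p q) :
    Metric.diam (Set.univ : Set (Sigma (block X))) = 3 * blockPos r ⊤ := by
  have hle (p q : Sigma (block X)) : dist p q ≤ 3 * blockPos r ⊤ :=
    (hd p q).trans_le (blockDist_le_three_mul_blockPos_top hr hsum hdiam p q)
  have hends (x : block X ⊥) (y : block X ⊤) :
      dist (⟨⊥, x⟩ : Sigma (block X)) ⟨⊤, y⟩ = 3 * blockPos r ⊤ := by
    rw [hd, blockDist_mk_of_ne hr hsum bot_ne_top, blockPos_bot, zero_sub, abs_neg,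
      abs_of_nonneg (blockPos_nonneg hr hsum ⊤)]
  have hbdd : Bornology.IsBounded (Set.univ : Set (Sigma (block X))) :=
    Metric.isBounded_iff.2 ⟨_, fun p _ q _ => hle p q⟩
  refine le_antisymm (Metric.diam_le_of_forall_dist_le ?_ fun p _ q _ => hle p q) ?_
  · exact (hends PUnit.unit PUnit.unit) ▸ dist_nonneg
  · exact (hends PUnit.unit PUnit.unit).symm.trans_le
      (Metric.dist_le_diam_of_mem hbdd trivial trivial)

end SigmaMetric

theorem block_construction_metric_compact_diam_general
    (r : ℕ → ℝ) (hr : ∀ n, 1 ≤ n → 0 < r n) (hsum : Summable fun n => r (n + 1))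
    (X : ℕ → Type) [∀ n, MetricSpace (X n)] [∀ n, CompactSpace (X n)]
    (hdiam : ∀ n, 1 ≤ n → Metric.diam (Set.univ : Set (X n)) ≤ r n) :
    ∃ m : MetricSpace (Sigma (block X)),
      (∀ p q : Sigma (block X), @dist _ m.toPseudoMetricSpace.toDist p q = blockDist r X p q) ∧
      @CompactSpace _ m.toPseudoMetricSpace.toUniformSpace.toTopologicalSpace ∧
      @Metric.diam _ m.toPseudoMetricSpace (Set.univ : Set (Sigma (block X)))
        = 36 * cSum r - 3 * r 1 := by
  let m := blockMetricSpace hr hsum hdiam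
  have hd : ∀ p q, m.dist p q = blockDist r X p q := fun _ _ => rfl
  refine ⟨m, hd, compactSpace_of_dist_eq_blockDist hr hsum hd, ?_⟩
  rw [diam_univ_of_dist_eq_blockDist hr hsum hdiam hd, blockPos_top hsum]
  ring

/-- For a convergent series `c = Σ_{n≥1} r_n` of positive terms and compact
metric spaces `X_n` with `diam X_n ≤ r_n`, the distance `blockDist` is a well-defined metric on
the disjoint union `𝔖_r(X)`, the resulting space is compact, and its diameter is `36c − 3r_1`. -/
theorem block_construction_metric_compact_diam
    (r : ℕ → ℝ) (hr : ∀ n, 1 ≤ n → 0 < r n) (hsum : Summable fun n => r (n + 1))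
    (X : ℕ → Type) [∀ n, MetricSpace (X n)] [∀ n, CompactSpace (X n)] [∀ n, Nonempty (X n)]
    (hdiam : ∀ n, 1 ≤ n → Metric.diam (Set.univ : Set (X n)) ≤ r n) :
    ∃ m : MetricSpace (Sigma (block X)),
      (∀ p q : Sigma (block X), @dist _ m.toPseudoMetricSpace.toDist p q = blockDist r X p q) ∧
      @CompactSpace _ m.toPseudoMetricSpace.toUniformSpace.toTopologicalSpace ∧
      @Metric.diam _ m.toPseudoMetricSpace (Set.univ : Set (Sigma (block X)))
        = 36 * cSum r - 3 * r 1 :=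
  block_construction_metric_compact_diam_general r hr hsum X hdiam
end

section
/- Let c = Σ_{n≥1} r_n be a convergent series with r_n > 0. Then the subspace {(x_n)_{n≥1} : 0 ≤ x_n ≤ r_n} of ℓ^∞ (with supremum metric) can be isometrically embedded into the Gromov-Hausdorff space of compact metric spaces. -/
/-! Write `S = ∑ ρ`. A sequence `x` is encoded as the compact set `encodingSet ρ x ⊆ ℝ` made of the
two-point spaces `center ρ n ± x n`, whose centres are `≥ 3 (ρ m + ρ n)` apart and accumulate at
`6 S`, together with `6 S` and an isolated anchor at `-8 S`. Matching `center ρ n ± x n` with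
`center ρ n ± y n` gives `d_GH ≤ d_H ≤ sup |x n - y n|`. Conversely, a map between encodings of
distortion `2η < 2 ρ n` must fix the anchor, since every other point is far from it; as all points
lie to its right, the map then moves each point by at most `2η`. So it sends the pair at
`center ρ n` into the pair at `center ρ n`, which forces `x n ≤ y n + η`. -/

open Set Filter Topology Metric TopologicalSpace

namespace GromovHausdorff

theorem exists_map_abs_dist_sub_dist_le_of_ghDist_lt {X Y : Type*} [MetricSpace X]
    [CompactSpace X] [Nonempty X] [MetricSpace Y] [CompactSpace Y] [Nonempty Y] {δ : ℝ}
    (h : ghDist X Y < δ) : ∃ f : X → Y, ∀ a b, |dist (f a) (f b) - dist a b| ≤ 2 * δ := by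
  set φ := optimalGHInjl X Y
  set ψ := optimalGHInjr X Y
  have hfin : hausdorffEDist (range φ) (range ψ) ≠ ⊤ :=
    hausdorffEDist_ne_top_of_nonempty_of_bounded (range_nonempty _) (range_nonempty _)
      (isCompact_range (isometry_optimalGHInjl X Y).continuous).isBounded
      (isCompact_range (isometry_optimalGHInjr X Y).continuous).isBounded
  have hclose : ∀ a, ∃ b, dist (φ a) (ψ b) < δ := fun a => by
    obtain ⟨_, ⟨b, rfl⟩, hb⟩ :=
      exists_dist_lt_of_hausdorffDist_lt (mem_range_self a) (hausdorffDist_optimal.trans_lt h) hfin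
    exact ⟨b, hb⟩
  choose f hf using hclose
  refine ⟨f, fun a b => ?_⟩
  rw [← (isometry_optimalGHInjr X Y).dist_eq, ← (isometry_optimalGHInjl X Y).dist_eq]
  have := dist_dist_dist_le (ψ (f a)) (ψ (f b)) (φ a) (φ b)
  rw [Real.dist_eq, dist_comm (ψ (f a)) (φ a), dist_comm (ψ (f b)) (φ b)] at this
  linarith [hf a, hf b]

end GromovHausdorff

namespace BoxEmbedding

variable {ρ x y : ℕ → ℝ}

noncomputable def center (ρ : ℕ → ℝ) (n : ℕ) : ℝ :=
  6 * ∑ k ∈ Finset.range n, ρ k + 3 * ρ n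

noncomputable def anchor (ρ : ℕ → ℝ) : ℝ :=
  -(8 * ∑' k, ρ k)

noncomputable def encodingSet (ρ x : ℕ → ℝ) : Set ℝ :=
  insert (anchor ρ) (insert (6 * ∑' k, ρ k)
    (range (fun n => center ρ n - x n) ∪ range (fun n => center ρ n + x n)))

lemma center_add_le (hρ : ∀ n, 0 ≤ ρ n) (hsum : Summable ρ) (n : ℕ) :
    center ρ n + 3 * ρ n ≤ 6 * ∑' k, ρ k := by
  have := hsum.sum_le_tsum (Finset.range (n + 1)) fun k _ => hρ k
  rw [Finset.sum_range_succ] at this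
  unfold center
  linarith

lemma three_mul_le_center (hρ : ∀ n, 0 ≤ ρ n) (n : ℕ) : 3 * ρ n ≤ center ρ n := by
  have := Finset.sum_nonneg fun k (_ : k ∈ Finset.range n) => hρ k
  unfold center
  linarith

lemma center_add_le_center (hρ : ∀ n, 0 ≤ ρ n) {m n : ℕ} (h : m < n) :
    center ρ m + 3 * ρ m + 3 * ρ n ≤ center ρ n := by
  have := Finset.sum_le_sum_of_subset_of_nonneg (Finset.range_subset_range.mpr h)
    fun k _ _ => hρ k
  rw [Finset.sum_range_succ] at this
  unfold center
  linarith

lemma anchor_mem : anchor ρ ∈ encodingSet ρ x := mem_insert _ _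

lemma six_mul_tsum_mem : 6 * ∑' k, ρ k ∈ encodingSet ρ x :=
  mem_insert_of_mem _ (mem_insert _ _)

lemma center_sub_mem (n : ℕ) : center ρ n - x n ∈ encodingSet ρ x :=
  mem_insert_of_mem _ (mem_insert_of_mem _ (Or.inl ⟨n, rfl⟩))

lemma center_add_mem (n : ℕ) : center ρ n + x n ∈ encodingSet ρ x :=
  mem_insert_of_mem _ (mem_insert_of_mem _ (Or.inr ⟨n, rfl⟩))

lemma eq_anchor_or_eq_or_exists_of_mem (hx : ∀ n, 0 ≤ x n) {p : ℝ}
    (hp : p ∈ encodingSet ρ x) :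
    p = anchor ρ ∨ p = 6 * ∑' k, ρ k ∨ ∃ n, |p - center ρ n| = x n := by
  simp only [encodingSet, mem_insert_iff, mem_union, mem_range] at hp
  rcases hp with rfl | rfl | ⟨n, rfl⟩ | ⟨n, rfl⟩
  · exact Or.inl rfl
  · exact Or.inr (Or.inl rfl)
  · exact Or.inr (Or.inr ⟨n, by rw [sub_sub_cancel_left, abs_neg, abs_of_nonneg (hx n)]⟩)
  · exact Or.inr (Or.inr ⟨n, by rw [add_sub_cancel_left, abs_of_nonneg (hx n)]⟩)

lemma eq_anchor_or_mem_Icc (hx : ∀ n, 0 ≤ x n ∧ x n ≤ ρ n) (hsum : Summable ρ) {p : ℝ}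
    (hp : p ∈ encodingSet ρ x) : p = anchor ρ ∨ p ∈ Icc 0 (6 * ∑' k, ρ k) := by
  have hρ n : 0 ≤ ρ n := (hx n).1.trans (hx n).2
  rcases eq_anchor_or_eq_or_exists_of_mem (fun n => (hx n).1) hp with h | rfl | ⟨n, hn⟩
  · exact Or.inl h
  · exact Or.inr ⟨mul_nonneg (by norm_num) (tsum_nonneg hρ), le_rfl⟩
  · have := abs_le.mp (hn.trans_le (hx n).2)
    have := three_mul_le_center hρ n
    have := center_add_le hρ hsum n
    exact Or.inr ⟨by linarith, by linarith⟩

lemma anchor_le_of_mem (hx : ∀ n, 0 ≤ x n ∧ x n ≤ ρ n) (hsum : Summable ρ) {p : ℝ}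
    (hp : p ∈ encodingSet ρ x) : anchor ρ ≤ p := by
  have : 0 ≤ ∑' k, ρ k := tsum_nonneg fun n => (hx n).1.trans (hx n).2
  rcases eq_anchor_or_mem_Icc hx hsum hp with rfl | hp
  · exact le_rfl
  · unfold anchor
    linarith [hp.1]

lemma abs_sub_center_le_of_mem (hx : ∀ n, 0 ≤ x n ∧ x n ≤ ρ n) (hsum : Summable ρ) {p : ℝ}
    (hp : p ∈ encodingSet ρ x) {n : ℕ} (hpn : |p - center ρ n| < 3 * ρ n) :
    |p - center ρ n| ≤ x n := by
  have hρ n : 0 ≤ ρ n := (hx n).1.trans (hx n).2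
  have hS : 0 ≤ ∑' k, ρ k := tsum_nonneg hρ
  have hpn' := abs_lt.mp hpn
  have hc := three_mul_le_center hρ n
  rcases eq_anchor_or_eq_or_exists_of_mem (fun n => (hx n).1) hp with rfl | rfl | ⟨m, hm⟩
  · unfold anchor at hpn'
    linarith
  · linarith [center_add_le hρ hsum n]
  · have hpm := abs_le.mp (hm.trans_le (hx m).2)
    rcases lt_trichotomy m n with hmn | rfl | hmn
    · linarith [center_add_le_center hρ hmn]
    · exact hm.le
    · linarith [center_add_le_center hρ hmn, hρ m]

lemma isCompact_encodingSet (hx : ∀ n, 0 ≤ x n ∧ x n ≤ ρ n) (hsum : Summable ρ) :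
    IsCompact (encodingSet ρ x) := by
  have hc : Tendsto (center ρ) atTop (𝓝 (6 * ∑' k, ρ k)) := by
    have := (hsum.hasSum.tendsto_sum_nat.const_mul 6).add (hsum.tendsto_atTop_zero.const_mul 3)
    rwa [mul_zero, add_zero] at this
  have hx0 : Tendsto x atTop (𝓝 0) :=
    squeeze_zero (fun n => (hx n).1) (fun n => (hx n).2) hsum.tendsto_atTop_zero
  rw [encodingSet, insert_union_distrib]
  refine IsCompact.insert (IsCompact.union ?_ ?_) _
  · exact Tendsto.isCompact_insert_range (by simpa using hc.sub hx0)
  · exact Tendsto.isCompact_insert_range (by simpa using hc.add hx0)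

noncomputable def encoding (hsum : Summable ρ) (hx : ∀ n, 0 ≤ x n ∧ x n ≤ ρ n) :
    NonemptyCompacts ℝ :=
  ⟨⟨encodingSet ρ x, isCompact_encodingSet hx hsum⟩, ⟨_, anchor_mem⟩⟩

lemma hausdorffDist_encodingSet_le {r : ℝ} (h : ∀ n, |x n - y n| ≤ r) :
    hausdorffDist (encodingSet ρ x) (encodingSet ρ y) ≤ r := by
  have hr : 0 ≤ r := (abs_nonneg _).trans (h 0)
  have close : ∀ u v : ℕ → ℝ, (∀ n, |u n - v n| ≤ r) →
      ∀ p ∈ encodingSet ρ u, ∃ q ∈ encodingSet ρ v, dist p q ≤ r := by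
    intro u v h p hp
    simp only [encodingSet, mem_insert_iff, mem_union, mem_range] at hp
    rcases hp with rfl | rfl | ⟨n, rfl⟩ | ⟨n, rfl⟩
    · exact ⟨_, anchor_mem, by rwa [dist_self]⟩
    · exact ⟨_, six_mul_tsum_mem, by rwa [dist_self]⟩
    · refine ⟨_, center_sub_mem n, ?_⟩
      rw [Real.dist_eq, sub_sub_sub_cancel_left, abs_sub_comm]
      exact h n
    · exact ⟨_, center_add_mem n, by rw [Real.dist_eq, add_sub_add_left_eq_sub]; exact h n⟩
  exact hausdorffDist_le_of_mem_dist hr (close x y h)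
    (close y x fun n => (abs_sub_comm _ _).trans_le (h n))

section Distortion

variable {η : ℝ} (f : encodingSet ρ x → encodingSet ρ y)

lemma map_anchor (hx : ∀ n, 0 ≤ x n ∧ x n ≤ ρ n) (hy : ∀ n, 0 ≤ y n ∧ y n ≤ ρ n)
    (hsum : Summable ρ) (hf : ∀ a b, |(|(f a : ℝ) - f b| - |(a : ℝ) - b|)| ≤ 2 * η) {n : ℕ}
    (hη : η < ρ n) : (f ⟨anchor ρ, anchor_mem⟩ : ℝ) = anchor ρ := by
  have hρ n : 0 ≤ ρ n := (hx n).1.trans (hx n).2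
  set G : encodingSet ρ x := ⟨anchor ρ, anchor_mem⟩
  have hη0 : 0 ≤ η := by simpa using hf G G
  have hηS : η < ∑' k, ρ k := hη.trans_le (hsum.le_tsum n fun k _ => hρ k)
  by_contra hfG
  obtain ⟨hfG0, hfG6⟩ := (eq_anchor_or_mem_Icc hy hsum (f G).2).resolve_left hfG
  -- a point `≥ 8 ∑ ρ` away from `G` cannot land in `[0, 6 ∑ ρ]` next to `f G`
  have collapse : ∀ a : encodingSet ρ x, (a : ℝ) ≠ anchor ρ → (f a : ℝ) = anchor ρ := by
    intro a ha
    by_contra hfa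
    have ha0 := ((eq_anchor_or_mem_Icc hx hsum a.2).resolve_left ha).1
    obtain ⟨hfa0, hfa6⟩ := (eq_anchor_or_mem_Icc hy hsum (f a).2).resolve_left hfa
    have hd := (abs_le.mp (hf a G)).1
    have hG : (a : ℝ) - anchor ρ ≤ |(a : ℝ) - G| := le_abs_self _
    have hfaG : |(f a : ℝ) - f G| ≤ 6 * ∑' k, ρ k := abs_sub_le_iff.mpr ⟨by linarith, by linarith⟩
    unfold anchor at hG
    linarith
  set L : encodingSet ρ x := ⟨6 * ∑' k, ρ k, six_mul_tsum_mem⟩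
  set B : encodingSet ρ x := ⟨center ρ n - x n, center_sub_mem n⟩
  have hB := three_mul_le_center hρ n
  have hL := center_add_le hρ hsum n
  have hfL := collapse L (by change 6 * ∑' k, ρ k ≠ -(8 * ∑' k, ρ k); linarith)
  have hfB := collapse B (by change center ρ n - x n ≠ -(8 * ∑' k, ρ k); linarith [(hx n).2])
  have hd := (abs_le.mp (hf L B)).1
  have hLB : 6 * ∑' k, ρ k - (center ρ n - x n) ≤ |(L : ℝ) - B| := le_abs_self _
  rw [hfL, hfB, sub_self, abs_zero] at hd
  linarith [(hx n).1]

lemma abs_map_sub_le (hx : ∀ n, 0 ≤ x n ∧ x n ≤ ρ n) (hy : ∀ n, 0 ≤ y n ∧ y n ≤ ρ n)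
    (hsum : Summable ρ) (hf : ∀ a b, |(|(f a : ℝ) - f b| - |(a : ℝ) - b|)| ≤ 2 * η) {n : ℕ}
    (hη : η < ρ n) (a : encodingSet ρ x) : |(f a : ℝ) - a| ≤ 2 * η := by
  have h := hf a ⟨anchor ρ, anchor_mem⟩
  rw [map_anchor f hx hy hsum hf hη,
    abs_of_nonneg (sub_nonneg.mpr (anchor_le_of_mem hy hsum (f a).2)),
    abs_of_nonneg (sub_nonneg.mpr (anchor_le_of_mem hx hsum a.2)), sub_sub_sub_cancel_right] at h
  exact h

lemma sub_le_of_distortion_le (hx : ∀ n, 0 ≤ x n ∧ x n ≤ ρ n) (hy : ∀ n, 0 ≤ y n ∧ y n ≤ ρ n)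
    (hsum : Summable ρ) (hf : ∀ a b, |(|(f a : ℝ) - f b| - |(a : ℝ) - b|)| ≤ 2 * η) (n : ℕ) :
    x n - y n ≤ η := by
  by_cases hη : ρ n ≤ η
  · linarith [(hx n).2, (hy n).1]
  push Not at hη
  have near_center : ∀ a : encodingSet ρ x, |(a : ℝ) - center ρ n| ≤ x n →
      |(f a : ℝ) - center ρ n| ≤ y n := fun a ha =>
    abs_sub_center_le_of_mem hy hsum (f a).2 <| calc
      |(f a : ℝ) - center ρ n| ≤ |(f a : ℝ) - a| + |(a : ℝ) - center ρ n| := abs_sub_le _ _ _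
      _ < 3 * ρ n := by linarith [abs_map_sub_le f hx hy hsum hf hη a, (hx n).2]
  set A : encodingSet ρ x := ⟨center ρ n - x n, center_sub_mem n⟩
  set B : encodingSet ρ x := ⟨center ρ n + x n, center_add_mem n⟩
  have hA := abs_le.mp (near_center A (by simp [A, abs_of_nonneg (hx n).1]))
  have hB := abs_le.mp (near_center B (by simp [B, abs_of_nonneg (hx n).1]))
  have hfAB : |(f B : ℝ) - f A| ≤ 2 * y n := abs_sub_le_iff.mpr ⟨by linarith, by linarith⟩
  have hd := (abs_le.mp (hf B A)).1
  have hBA : center ρ n + x n - (center ρ n - x n) ≤ |(B : ℝ) - A| := le_abs_self _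
  linarith

end Distortion

lemma abs_sub_le_dist_toGHSpace (hsum : Summable ρ) (hx : ∀ n, 0 ≤ x n ∧ x n ≤ ρ n)
    (hy : ∀ n, 0 ≤ y n ∧ y n ≤ ρ n) (n : ℕ) :
    |x n - y n| ≤ dist (encoding hsum hx).toGHSpace (encoding hsum hy).toGHSpace := by
  refine le_of_forall_gt_imp_ge_of_dense fun δ hδ => abs_sub_le_iff.mpr ⟨?_, ?_⟩
  · obtain ⟨f, hf⟩ := GromovHausdorff.exists_map_abs_dist_sub_dist_le_of_ghDist_lt
      (X := encoding hsum hx) (Y := encoding hsum hy) hδ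
    exact sub_le_of_distortion_le f hx hy hsum hf n
  · rw [dist_comm] at hδ
    obtain ⟨f, hf⟩ := GromovHausdorff.exists_map_abs_dist_sub_dist_le_of_ghDist_lt
      (X := encoding hsum hy) (Y := encoding hsum hx) hδ
    exact sub_le_of_distortion_le f hy hx hsum hf n

end BoxEmbedding

open BoxEmbedding in
theorem box_embeds_into_GHSpace_general
    (r : ℕ → ℝ) (hsum : Summable fun n => r (n + 1)) :
    ∃ f : {x : ℕ → ℝ // ∀ n, 0 ≤ x n ∧ x n ≤ r (n + 1)} → GromovHausdorff.GHSpace,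
      ∀ x y, dist (f x) (f y) = ⨆ n, |x.1 n - y.1 n| := by
  set f := fun x : {x : ℕ → ℝ // ∀ n, 0 ≤ x n ∧ x n ≤ r (n + 1)} => (encoding hsum x.2).toGHSpace
  have lower x y n : |x.1 n - y.1 n| ≤ dist (f x) (f y) :=
    abs_sub_le_dist_toGHSpace hsum x.2 y.2 n
  refine ⟨f, fun x y => le_antisymm ?_ (ciSup_le (lower x y))⟩
  calc dist (f x) (f y) ≤ dist (encoding hsum x.2) (encoding hsum y.2) :=
        GromovHausdorff.ghDist_le_nonemptyCompacts_dist _ _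
    _ ≤ ⨆ n, |x.1 n - y.1 n| :=
        hausdorffDist_encodingSet_le fun n => le_ciSup ⟨_, forall_mem_range.mpr (lower x y)⟩ n

/-- Let `c = Σ_{n≥1} r_n` be a convergent series with positive terms. Then the
subspace `{(x_n)_{n≥1} : 0 ≤ x_n ≤ r_n}` of `ℓ^∞` with the supremum metric embeds isometrically
into the Gromov-Hausdorff space of compact metric spaces: there is a map to `GHSpace` carrying
the supremum distance to the Gromov-Hausdorff distance. (Here the sequence `(x_n)_{n≥1}` is
represented by `x : ℕ → ℝ` with `x n` standing for `x_{n+1}`.) -/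
theorem box_embeds_into_GHSpace
    (r : ℕ → ℝ) (hr : ∀ n, 0 < r (n + 1)) (hsum : Summable fun n => r (n + 1)) :
    ∃ f : {x : ℕ → ℝ // ∀ n, 0 ≤ x n ∧ x n ≤ r (n + 1)} → GromovHausdorff.GHSpace,
      ∀ x y, dist (f x) (f y) = ⨆ n, |x.1 n - y.1 n| :=
  box_embeds_into_GHSpace_general r hsum
end

section
/- Every bounded subset of ℝ^n equipped with the ℓ^∞ (maximum) metric can be isometrically embedded into the Gromov-Hausdorff space of compact metric spaces. -/
/-!
Send `x` with `‖x‖ ≤ M` to the finite ultrametric space consisting of a centre and `n` points,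
the `i`-th at distance `8M(i+1) + 2xᵢ` from the centre, distinct non-central points being at the
larger of their distances to the centre. The identity correspondence shows that the
Gromov-Hausdorff distance of the spaces for `x` and `y` is at most `‖x - y‖`. Were it smaller, there
would be a map between them of distortion less than `2‖x - y‖ ≤ 4M`. It sends the centre and the
`i`-th point to two points at distance `0` or some `8M(j+1) + 2yⱼ`; as these values differ by at
least `4M` from `8M(i+1) + 2xᵢ` unless `j = i`, we get `2|xᵢ - yᵢ| < 2‖x - y‖` for every `i`.
-/

open Function Metric Set

namespace GromovHausdorff

variable {X Y : Type*} [MetricSpace X] [CompactSpace X] [Nonempty X]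
  [MetricSpace Y] [CompactSpace Y] [Nonempty Y]

theorem ghDist_le_of_surjective_of_abs_dist_sub_le {Φ : X → Y} (hΦ : Surjective Φ) {ε : ℝ}
    (h : ∀ a b, |dist (Φ a) (Φ b) - dist a b| ≤ 2 * ε) : ghDist X Y ≤ ε := by
  have := ghDist_le_of_approx_subsets (s := univ) (fun a => Φ a) (ε₁ := 0) (ε₃ := 0)
    (fun a => ⟨a, mem_univ a, by simp⟩)
    (fun b => ⟨⟨surjInv hΦ b, mem_univ _⟩, by simp [surjInv_eq hΦ]⟩)
    (fun a b => by rw [abs_sub_comm]; exact h a b)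
  linarith

theorem exists_abs_dist_sub_lt_of_ghDist_lt {r : ℝ} (h : ghDist X Y < r) :
    ∃ f : X → Y, ∀ a b, |dist (f a) (f b) - dist a b| < 2 * r := by
  obtain ⟨φ, ψ, hφ, hψ, hH⟩ := ghDist_eq_hausdorffDist X Y
  have hfin : hausdorffEDist (range φ) (range ψ) ≠ ⊤ :=
    hausdorffEDist_ne_top_of_nonempty_of_bounded (range_nonempty φ) (range_nonempty ψ)
      (isCompact_range hφ.continuous).isBounded (isCompact_range hψ.continuous).isBounded
  have near (a : X) : ∃ b : Y, dist (φ a) (ψ b) < r := by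
    obtain ⟨_, ⟨b, rfl⟩, hb⟩ :=
      exists_dist_lt_of_hausdorffDist_lt (mem_range_self a) (hH ▸ h) hfin
    exact ⟨b, hb⟩
  choose f hf using near
  refine ⟨f, fun a b => ?_⟩
  have := dist_dist_dist_le (ψ (f a)) (ψ (f b)) (φ a) (φ b)
  rw [hψ.dist_eq, hφ.dist_eq, Real.dist_eq, dist_comm (ψ _), dist_comm (ψ _)] at this
  linarith [hf a, hf b]

end GromovHausdorff

/-- The finite ultrametric space on `Option ι` with centre `none`, in which `some i` lies at
distance `w i` from the centre and two distinct points lie at the larger of their distances to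
the centre. -/
@[ext]
structure StarSpace {ι : Type*} (w : ι → ℝ) (_ : ∀ i, 0 < w i) where
  pt : Option ι

namespace StarSpace

variable {ι : Type*} {w v : ι → ℝ} {hw : ∀ i, 0 < w i} {hv : ∀ i, 0 < v i}

def radius (p : StarSpace w hw) : ℝ := p.pt.elim 0 w

theorem radius_nonneg (p : StarSpace w hw) : 0 ≤ p.radius := by
  rcases p with ⟨_ | i⟩
  exacts [le_rfl, (hw i).le]

open scoped Classical in
noncomputable instance : MetricSpace (StarSpace w hw) where
  dist p q := if p = q then 0 else max p.radius q.radius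
  dist_self p := by simp
  dist_comm p q := by simp only [eq_comm (a := p), max_comm]
  dist_triangle p q r := by
    have := p.radius_nonneg; have := q.radius_nonneg; have := r.radius_nonneg
    split_ifs <;> grind
  eq_of_dist_eq_zero {p q} h := by
    by_contra hpq
    simp only [if_neg hpq] at h
    rcases p with ⟨_ | i⟩ <;> rcases q with ⟨_ | j⟩ <;> grind [radius]

instance [Finite ι] : Finite (StarSpace w hw) :=
  .of_injective StarSpace.pt fun _ _ => StarSpace.ext

instance : Nonempty (StarSpace w hw) := ⟨⟨none⟩⟩

open scoped Classical in
theorem dist_eq (p q : StarSpace w hw) : dist p q = if p = q then 0 else max p.radius q.radius :=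
  rfl

theorem dist_centre_vertex (i : ι) : dist (⟨none⟩ : StarSpace w hw) ⟨some i⟩ = w i := by
  rw [dist_eq, if_neg (by simp)]
  exact max_eq_right (hw i).le

theorem dist_eq_zero_or_exists_eq (p q : StarSpace w hw) : dist p q = 0 ∨ ∃ j, dist p q = w j := by
  rw [dist_eq]
  rcases p with ⟨_ | i⟩ <;> rcases q with ⟨_ | j⟩ <;> grind [radius]

theorem ghDist_le [Finite ι] {ε : ℝ} (hε : 0 ≤ ε) (h : ∀ i, |w i - v i| ≤ 2 * ε) :
    GromovHausdorff.ghDist (StarSpace w hw) (StarSpace v hv) ≤ ε := by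
  have radius_close (p : Option ι) :
      |(⟨p⟩ : StarSpace v hv).radius - (⟨p⟩ : StarSpace w hw).radius| ≤ 2 * ε := by
    rcases p with _ | i
    · simpa [radius] using hε
    · simpa [radius, abs_sub_comm] using h i
  refine GromovHausdorff.ghDist_le_of_surjective_of_abs_dist_sub_le
    (Φ := fun p : StarSpace w hw => (⟨p.pt⟩ : StarSpace v hv))
    (fun q => ⟨⟨q.pt⟩, rfl⟩) fun ⟨p⟩ ⟨q⟩ => ?_
  rcases eq_or_ne p q with rfl | hpq
  · simpa using hε
  · rw [dist_eq, dist_eq, if_neg (by simpa), if_neg (by simpa)]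
    exact (abs_max_sub_max_le_max _ _ _ _).trans (max_le (radius_close _) (radius_close _))

theorem abs_sub_lt_of_ghDist_lt [Finite ι] {r : ℝ} (hwr : ∀ i, 2 * r ≤ w i)
    (hsep : ∀ i j, i ≠ j → 2 * r ≤ |w i - v j|)
    (h : GromovHausdorff.ghDist (StarSpace w hw) (StarSpace v hv) < r) (i : ι) :
    |w i - v i| < 2 * r := by
  obtain ⟨Φ, hΦ⟩ := GromovHausdorff.exists_abs_dist_sub_lt_of_ghDist_lt h
  have hi := hΦ ⟨none⟩ ⟨some i⟩
  rw [dist_centre_vertex] at hi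
  rcases dist_eq_zero_or_exists_eq (Φ ⟨none⟩) (Φ ⟨some i⟩) with h0 | ⟨j, hj⟩
  · rw [h0, zero_sub, abs_neg, abs_of_pos (hw i)] at hi
    linarith [hwr i]
  · rw [hj, abs_sub_comm] at hi
    by_cases hji : j = i
    · rwa [hji] at hi
    · linarith [hsep i j (Ne.symm hji)]

end StarSpace

/-- The `i`-th weight places `x i` in a window of width `4M` around `8M(i+1)`, so that for
`‖x‖, ‖y‖ ≤ M` the windows of different indices stay `4M` apart. -/
def linftyWeight {n : ℕ} (M : ℝ) (x : Fin n → ℝ) (i : Fin n) : ℝ := 8 * M * (i + 1) + 2 * x i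

section linftyWeight

variable {n : ℕ} {M : ℝ} {x y : Fin n → ℝ}

theorem linftyWeight_sub_linftyWeight (i : Fin n) :
    linftyWeight M x i - linftyWeight M y i = 2 * (x i - y i) := by
  unfold linftyWeight; ring

theorem four_mul_le_linftyWeight (hx : ∀ i, |x i| ≤ M) (i : Fin n) :
    4 * M ≤ linftyWeight M x i := by
  have := abs_le.1 (hx i)
  have : (0 : ℝ) ≤ i := Nat.cast_nonneg _
  unfold linftyWeight
  nlinarith

theorem four_mul_le_abs_linftyWeight_sub_linftyWeight (hx : ∀ i, |x i| ≤ M)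
    (hy : ∀ i, |y i| ≤ M) {i j : Fin n} (hij : i ≠ j) :
    4 * M ≤ |linftyWeight M x i - linftyWeight M y j| := by
  have := abs_le.1 (hx i); have := abs_le.1 (hy j)
  have hM : 0 ≤ M := (abs_nonneg _).trans (hx i)
  unfold linftyWeight
  rcases Fin.lt_or_lt_of_ne hij with h | h
  · have : (i : ℝ) + 1 ≤ j := by exact_mod_cast h
    rw [abs_sub_comm]
    exact le_abs.2 (Or.inl (by nlinarith))
  · have : (j : ℝ) + 1 ≤ i := by exact_mod_cast h
    exact le_abs.2 (Or.inl (by nlinarith))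

end linftyWeight

theorem abs_apply_le_of_mem_closedBall {ι : Type*} [Fintype ι] {x : ι → ℝ} {M : ℝ}
    (hx : x ∈ closedBall 0 M) (i : ι) : |x i| ≤ M :=
  (norm_le_pi_norm x i).trans (mem_closedBall_zero_iff.1 hx)

open GromovHausdorff in
noncomputable def closedBallToGHSpace {n : ℕ} {M : ℝ} (hM : 0 < M)
    (x : closedBall (0 : Fin n → ℝ) M) : GHSpace :=
  toGHSpace <| StarSpace (linftyWeight M x.1) fun i =>
    by linarith [four_mul_le_linftyWeight (abs_apply_le_of_mem_closedBall x.2) i]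

theorem isometry_closedBallToGHSpace {n : ℕ} {M : ℝ} (hM : 0 < M) :
    Isometry (closedBallToGHSpace (n := n) hM) := by
  refine Isometry.of_dist_eq fun x y => ?_
  have hx := abs_apply_le_of_mem_closedBall x.2
  have hy := abs_apply_le_of_mem_closedBall y.2
  have dist_coord (i : Fin n) :
      |linftyWeight M x.1 i - linftyWeight M y.1 i| = 2 * |x.1 i - y.1 i| := by
    rw [linftyWeight_sub_linftyWeight, abs_mul, abs_two]
  change GromovHausdorff.ghDist (StarSpace (linftyWeight M x.1) _)
    (StarSpace (linftyWeight M y.1) _) = dist x y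
  refine le_antisymm (StarSpace.ghDist_le dist_nonneg fun i => ?_) (not_lt.1 fun hlt => ?_)
  · rw [dist_coord, ← Real.dist_eq]
    gcongr
    exact dist_le_pi_dist x.1 y.1 i
  · have hxy : dist x y ≤ 2 * M := by
      rw [Subtype.dist_eq]
      linarith [dist_triangle_right x.1 y.1 0, mem_closedBall.1 x.2, mem_closedBall.1 y.2]
    have hcoord := StarSpace.abs_sub_lt_of_ghDist_lt
      (fun i => by linarith [four_mul_le_linftyWeight hx i])
      (fun i j hij => by linarith [four_mul_le_abs_linftyWeight_sub_linftyWeight hx hy hij]) hlt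
    have hpos : 0 < dist x y := dist_nonneg.trans_lt hlt
    refine (dist_pi_lt_iff hpos).2 (fun i => ?_) |>.false
    rw [Real.dist_eq]
    linarith [hcoord i, dist_coord i]

/-- Every bounded subset of `ℝ^n` with the `ℓ^∞` (maximum) metric — which is
the product metric on `Fin n → ℝ` — embeds isometrically into the Gromov-Hausdorff space of
compact metric spaces. -/
theorem bounded_subset_linfty_embeds_into_GHSpace
    (n : ℕ) (s : Set (Fin n → ℝ)) (hs : Bornology.IsBounded s) :
    ∃ f : s → GromovHausdorff.GHSpace, Isometry f := by
  obtain ⟨M, hM, hsM⟩ := hs.subset_closedBall_lt 0 0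
  exact ⟨closedBallToGHSpace hM ∘ inclusion hsM,
    (isometry_closedBallToGHSpace hM).comp (Isometry.of_dist_eq fun _ _ => rfl)⟩
end
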